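/- arXiv:2108.05566 — 3 statements merged into one kernel-verified Lean document; each statement's English description precedes it below -/
import Mathlib

section
/- Let P(λ) = λ(J₁+R₁) + (J₂+R₂) be an n×n complex posH pencil. If the pencil λR₁ + R₂ is regular, i.e., det(μR₁ + R₂) ≠ 0 for some μ ∈ ℂ, then P(λ) is regular and has no eigenvalue on the positive real axis, i.e., det(α(J₁+R₁) + (J₂+R₂)) ≠ 0 for every real number α > 0. -/
open Matrix
open scoped ComplexOrder

/-!
If `(α(J₁+R₁) + (J₂+R₂))x = 0` with `α > 0`, take real parts in `x*(α(J₁+R₁) + (J₂+R₂))x = 0`: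
the skew-Hermitian terms are purely imaginary, so `α·x*R₁x + x*R₂x = 0` with both summands
nonnegative, which forces `R₁x = R₂x = 0`. Then `x ≠ 0` lies in the kernel of every `μR₁ + R₂`.
Taking `α = 1` shows that `P` is regular.
-/

namespace Matrix

variable {𝕜 ι : Type*} [RCLike 𝕜] [Fintype ι]

lemma re_star_dotProduct_mulVec_eq_zero_of_conjTranspose_eq_neg {J : Matrix ι ι 𝕜}
    (hJ : Jᴴ = -J) (x : ι → 𝕜) : RCLike.re (star x ⬝ᵥ J *ᵥ x) = 0 := by
  have hconj : star (star x ⬝ᵥ J *ᵥ x) = -(star x ⬝ᵥ J *ᵥ x) := by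
    conv_lhs => rw [star_dotProduct, star_star, star_mulVec, ← dotProduct_mulVec, hJ, neg_mulVec,
      dotProduct_neg]
  have := congrArg RCLike.re hconj
  simp only [RCLike.star_def, RCLike.conj_re, map_neg] at this
  linarith

lemma PosSemidef.re_dotProduct_mulVec_nonneg {R : Matrix ι ι 𝕜} (hR : R.PosSemidef) (x : ι → 𝕜) :
    0 ≤ RCLike.re (star x ⬝ᵥ R *ᵥ x) :=
  (RCLike.nonneg_iff.mp (hR.dotProduct_mulVec_nonneg x)).1

lemma PosSemidef.mulVec_eq_zero_of_re_dotProduct_mulVec_eq_zero {R : Matrix ι ι 𝕜}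
    (hR : R.PosSemidef) {x : ι → 𝕜} (h : RCLike.re (star x ⬝ᵥ R *ᵥ x) = 0) : R *ᵥ x = 0 := by
  refine (hR.dotProduct_mulVec_zero_iff x).mp (RCLike.ext ?_ ?_)
  · simpa using h
  · simpa using (RCLike.nonneg_iff.mp (hR.dotProduct_mulVec_nonneg x)).2

lemma mulVec_eq_zero_of_posH_pencil_mulVec_eq_zero {J₁ J₂ R₁ R₂ : Matrix ι ι 𝕜}
    (hJ₁ : J₁ᴴ = -J₁) (hJ₂ : J₂ᴴ = -J₂) (hR₁ : R₁.PosSemidef) (hR₂ : R₂.PosSemidef)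
    {α : ℝ} (hα : 0 < α) {x : ι → 𝕜} (hx : (α • (J₁ + R₁) + (J₂ + R₂)) *ᵥ x = 0) :
    R₁ *ᵥ x = 0 ∧ R₂ *ᵥ x = 0 := by
  have hre : α * RCLike.re (star x ⬝ᵥ R₁ *ᵥ x) + RCLike.re (star x ⬝ᵥ R₂ *ᵥ x) = 0 := by
    have := congrArg (fun v ↦ RCLike.re (star x ⬝ᵥ v)) hx
    simpa only [add_mulVec, smul_mulVec, dotProduct_add, dotProduct_smul, map_add,
      RCLike.smul_re, re_star_dotProduct_mulVec_eq_zero_of_conjTranspose_eq_neg hJ₁,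
      re_star_dotProduct_mulVec_eq_zero_of_conjTranspose_eq_neg hJ₂, zero_add, dotProduct_zero,
      map_zero] using this
  have h₁ := hR₁.re_dotProduct_mulVec_nonneg x
  have h₂ := hR₂.re_dotProduct_mulVec_nonneg x
  exact ⟨hR₁.mulVec_eq_zero_of_re_dotProduct_mulVec_eq_zero (by nlinarith),
    hR₂.mulVec_eq_zero_of_re_dotProduct_mulVec_eq_zero (by nlinarith)⟩

lemma det_posH_pencil_ne_zero [DecidableEq ι] {J₁ J₂ R₁ R₂ : Matrix ι ι 𝕜}
    (hJ₁ : J₁ᴴ = -J₁) (hJ₂ : J₂ᴴ = -J₂) (hR₁ : R₁.PosSemidef) (hR₂ : R₂.PosSemidef)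
    {μ : 𝕜} (hμ : (μ • R₁ + R₂).det ≠ 0) {α : ℝ} (hα : 0 < α) :
    (α • (J₁ + R₁) + (J₂ + R₂)).det ≠ 0 := by
  intro hdet
  obtain ⟨x, hx0, hx⟩ := exists_mulVec_eq_zero_iff.mpr hdet
  obtain ⟨h₁, h₂⟩ := mulVec_eq_zero_of_posH_pencil_mulVec_eq_zero hJ₁ hJ₂ hR₁ hR₂ hα hx
  refine hμ (exists_mulVec_eq_zero_iff.mp ⟨x, hx0, ?_⟩)
  rw [add_mulVec, smul_mulVec, h₁, h₂, smul_zero, add_zero]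

end Matrix

/-- Corollary 3.8(ii): if the pencil `λR₁ + R₂` is regular, then the posH pencil
`P(λ) = λ(J₁+R₁) + (J₂+R₂)` is regular and has no eigenvalues on the positive
real axis. -/
theorem posH_regular_of_hermitian_part_regular {n : ℕ}
    (J₁ J₂ R₁ R₂ : Matrix (Fin n) (Fin n) ℂ)
    (hJ₁ : J₁ᴴ = -J₁) (hJ₂ : J₂ᴴ = -J₂)
    (hR₁ : R₁.PosSemidef) (hR₂ : R₂.PosSemidef)
    (hreg : ∃ μ : ℂ, (μ • R₁ + R₂).det ≠ 0) :
    (∃ μ : ℂ, (μ • (J₁ + R₁) + (J₂ + R₂)).det ≠ 0) ∧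
    (∀ α : ℝ, 0 < α → ((α : ℂ) • (J₁ + R₁) + (J₂ + R₂)).det ≠ 0) := by
  obtain ⟨μ, hμ⟩ := hreg
  have hpos (α : ℝ) (hα : 0 < α) : ((α : ℂ) • (J₁ + R₁) + (J₂ + R₂)).det ≠ 0 := by
    rw [Complex.coe_smul]
    exact det_posH_pencil_ne_zero hJ₁ hJ₂ hR₁ hR₂ hμ hα
  exact ⟨⟨1, by simpa using hpos 1 one_pos⟩, hpos⟩
end

section
/- Let P(λ) = λ(J₁+R₁) + (J₂+R₂) be an n×n complex posH pencil. If λ₀ ∈ ℂ and x ∈ ℂⁿ are such that x*(λ₀(J₁+R₁) + (J₂+R₂))x = 0, x*(J₁+R₁)x ≠ 0, and the real number −(x*R₁x)(x*R₂x) + (x*J₁x)(x*J₂x) is ≤ 0, then Re λ₀ ≤ 0. -/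
/-!
Write `p = x*(J₁+R₁)x` and `q = x*(J₂+R₂)x`; then `λ₀ p + q = 0`, so
`Re λ₀ · |p|² = -Re (q p̄)`. Since `x*Rᵢx` is real and `x*Jᵢx` is purely imaginary, `Re (q p̄)` is
exactly minus the quantity `-(x*R₁x)(x*R₂x) + (x*J₁x)(x*J₂x)`, which is `≤ 0` by assumption.
-/

open Matrix ComplexConjugate
open scoped ComplexOrder

namespace Matrix

variable {ι 𝕜 : Type*} [Fintype ι] [RCLike 𝕜]

lemma star_star_dotProduct_mulVec (A : Matrix ι ι 𝕜) (x : ι → 𝕜) :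
    star (star x ⬝ᵥ A *ᵥ x) = star x ⬝ᵥ Aᴴ *ᵥ x := by
  rw [star_dotProduct, star_mulVec, star_star, dotProduct_mulVec]

lemma re_star_dotProduct_mulVec_self_of_conjTranspose_eq_neg {A : Matrix ι ι 𝕜} (hA : Aᴴ = -A)
    (x : ι → 𝕜) : RCLike.re (star x ⬝ᵥ A *ᵥ x) = 0 := by
  have h := congrArg RCLike.re (star_star_dotProduct_mulVec A x)
  rw [hA, neg_mulVec, dotProduct_neg, RCLike.star_def, RCLike.conj_re, map_neg] at h
  linarith

end Matrix

namespace Complex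

lemma re_nonpos_of_mul_add_eq_zero {lam p q : ℂ} (h : lam * p + q = 0) (hp : p ≠ 0)
    (hq : 0 ≤ (q * conj p).re) : lam.re ≤ 0 := by
  have hnormSq : lam.re * normSq p = -(q * conj p).re := by
    have := congrArg (fun z => (z * conj p).re) h
    simp only [add_mul, mul_assoc, mul_conj, add_re, re_mul_ofReal, zero_mul, zero_re] at this
    linarith
  have hpos : 0 < normSq p := normSq_pos.mpr hp
  nlinarith

lemma re_add_mul_conj_add {a b c d : ℂ} (ha : a.im = 0) (hb : b.re = 0) (hc : c.im = 0)
    (hd : d.re = 0) : ((d + c) * conj (b + a)).re = -(-a * c + b * d).re := by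
  simp only [mul_re, add_re, add_im, neg_re, neg_im, conj_re, conj_im, ha, hb, hc, hd]
  ring

end Complex

/-- Lemma 4.14: for a posH pencil `P(λ) = λ(J₁+R₁) + (J₂+R₂)`, if
`x*P(λ₀)x = 0`, `x*(J₁+R₁)x ≠ 0` and
`-(x*R₁x)(x*R₂x) + (x*J₁x)(x*J₂x) ≤ 0`, then `Re λ₀ ≤ 0`. -/
theorem posH_left_half_plane_of_quadratic_condition {n : ℕ}
    (J₁ J₂ R₁ R₂ : Matrix (Fin n) (Fin n) ℂ)
    (hJ₁ : J₁ᴴ = -J₁) (hJ₂ : J₂ᴴ = -J₂)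
    (hR₁ : R₁.PosSemidef) (hR₂ : R₂.PosSemidef)
    (lam : ℂ) (x : Fin n → ℂ)
    (hx : star x ⬝ᵥ ((lam • (J₁ + R₁) + (J₂ + R₂)) *ᵥ x) = 0)
    (hne : star x ⬝ᵥ ((J₁ + R₁) *ᵥ x) ≠ 0)
    (hcond : (-(star x ⬝ᵥ (R₁ *ᵥ x)) * (star x ⬝ᵥ (R₂ *ᵥ x)) +
        (star x ⬝ᵥ (J₁ *ᵥ x)) * (star x ⬝ᵥ (J₂ *ᵥ x))).re ≤ 0) :
    lam.re ≤ 0 := by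
  have hpencil : lam * (star x ⬝ᵥ (J₁ + R₁) *ᵥ x) + star x ⬝ᵥ (J₂ + R₂) *ᵥ x = 0 := by
    rwa [add_mulVec, smul_mulVec, dotProduct_add, dotProduct_smul, smul_eq_mul] at hx
  refine Complex.re_nonpos_of_mul_add_eq_zero hpencil hne ?_
  rw [add_mulVec, add_mulVec, dotProduct_add, dotProduct_add,
    Complex.re_add_mul_conj_add (hR₁.isHermitian.im_star_dotProduct_mulVec_self x)
      (re_star_dotProduct_mulVec_self_of_conjTranspose_eq_neg hJ₁ x)
      (hR₂.isHermitian.im_star_dotProduct_mulVec_self x)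
      (re_star_dotProduct_mulVec_self_of_conjTranspose_eq_neg hJ₂ x)]
  linarith
end

section
/- Let P(λ) = λ(J₁+R₁) + (J₂+R₂) be an n×n complex posH pencil such that for every x ∈ ℂⁿ the real number −(x*R₁x)(x*R₂x) + (x*J₁x)(x*J₂x) is ≤ 0. Assume that P(λ) is regular, i.e., det(λ₀(J₁+R₁) + (J₂+R₂)) ≠ 0 for some λ₀ ∈ ℂ, and that the numerical range of the pencil λJ₁ + J₂ is contained in the closed left half-plane, i.e., whenever μ ∈ ℂ and x ∈ ℂⁿ is nonzero with x*(μJ₁ + J₂)x = 0 one has Re μ ≤ 0. Then the numerical range of P(λ) is contained in the closed left half-plane: whenever μ ∈ ℂ and x ∈ ℂⁿ is nonzero with x*(μ(J₁+R₁) + (J₂+R₂))x = 0, one has Re μ ≤ 0. -/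
open Matrix
open scoped ComplexOrder ComplexConjugate

/-!
Fix `x ≠ 0` and write `x*J₁x = iα`, `x*J₂x = iβ`, `x*R₁x = ρ₁`, `x*R₂x = ρ₂` with `α, β, ρ₁, ρ₂`
real. Put `z = iα + ρ₁` and `w = iβ + ρ₂`, so that `x*P(μ)x = μz + w`. The hypothesis on `x`
says exactly `Re(z̄w) = ρ₁ρ₂ + αβ ≥ 0`, and `μz + w = 0` gives `Re μ · |z|² = -Re(z̄w) ≤ 0`.
If `z = 0` then `α = 0`, so `w = 0` forces `β = 0`, and `μ` lies in the numerical range of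
`λJ₁ + J₂`.
-/

namespace Matrix

variable {ι : Type*} [Fintype ι]

lemma re_star_dotProduct_mulVec_self_eq_zero {J : Matrix ι ι ℂ} (hJ : Jᴴ = -J) (x : ι → ℂ) :
    (star x ⬝ᵥ J *ᵥ x).re = 0 := by
  have hstar : star (star x ⬝ᵥ J *ᵥ x) = -(star x ⬝ᵥ J *ᵥ x) := by
    rw [← star_dotProduct_star, star_star, star_mulVec, ← dotProduct_mulVec, hJ, neg_mulVec,
      dotProduct_neg]
  have hre := congrArg Complex.re hstar
  rw [Complex.star_def, Complex.conj_re, Complex.neg_re] at hre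
  linarith

lemma star_dotProduct_smul_add_mulVec {R : Type*} [CommSemiring R] [StarRing R]
    (A B : Matrix ι ι R) (μ : R) (x : ι → R) :
    star x ⬝ᵥ (μ • A + B) *ᵥ x = μ * (star x ⬝ᵥ A *ᵥ x) + star x ⬝ᵥ B *ᵥ x := by
  rw [add_mulVec, smul_mulVec, dotProduct_add, dotProduct_smul, smul_eq_mul]

end Matrix

namespace Complex

lemma eq_zero_of_re_eq_zero_of_add_eq_zero {a r : ℂ} (ha : a.re = 0) (hr : r.im = 0)
    (h : a + r = 0) : a = 0 := by
  have him := congrArg im h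
  rw [add_im, hr, add_zero, zero_im] at him
  exact ext ha him

lemma re_conj_add_mul_add {a b r₁ r₂ : ℂ} (ha : a.re = 0) (hb : b.re = 0) (hr₁ : r₁.im = 0)
    (hr₂ : r₂.im = 0) :
    (conj (a + r₁) * (b + r₂)).re = -(-r₁ * r₂ + a * b).re := by
  simp only [mul_re, add_re, add_im, conj_re, conj_im, neg_re, ha, hb, hr₁, hr₂]
  ring

lemma re_nonpos_of_mul_add_eq_zero_s14 {μ z w : ℂ} (hz : z ≠ 0) (hzw : 0 ≤ (conj z * w).re)
    (h : μ * z + w = 0) : μ.re ≤ 0 := by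
  have hμ : μ * normSq z = -(conj z * w) := by
    rw [← mul_conj, ← mul_assoc, eq_neg_of_add_eq_zero_left h]
    ring
  have hre : μ.re * normSq z = -(conj z * w).re := by
    simpa using congrArg re hμ
  nlinarith [normSq_pos.mpr hz]

end Complex

theorem posH_numrange_left_half_plane_of_regular_general {n : ℕ}
    (J₁ J₂ R₁ R₂ : Matrix (Fin n) (Fin n) ℂ)
    (hJ₁ : J₁ᴴ = -J₁) (hJ₂ : J₂ᴴ = -J₂)
    (hR₁ : R₁.PosSemidef) (hR₂ : R₂.PosSemidef)
    (hcond : ∀ x : Fin n → ℂ,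
      (-(star x ⬝ᵥ (R₁ *ᵥ x)) * (star x ⬝ᵥ (R₂ *ᵥ x)) +
        (star x ⬝ᵥ (J₁ *ᵥ x)) * (star x ⬝ᵥ (J₂ *ᵥ x))).re ≤ 0)
    (hskew : ∀ (μ : ℂ) (x : Fin n → ℂ), x ≠ 0 →
      star x ⬝ᵥ ((μ • J₁ + J₂) *ᵥ x) = 0 → μ.re ≤ 0) :
    ∀ (μ : ℂ) (x : Fin n → ℂ), x ≠ 0 →
      star x ⬝ᵥ ((μ • (J₁ + R₁) + (J₂ + R₂)) *ᵥ x) = 0 → μ.re ≤ 0 := by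
  intro μ x hx h
  have ha := re_star_dotProduct_mulVec_self_eq_zero hJ₁ x
  have hb := re_star_dotProduct_mulVec_self_eq_zero hJ₂ x
  have hr₁ : (star x ⬝ᵥ R₁ *ᵥ x).im = 0 := hR₁.isHermitian.im_star_dotProduct_mulVec_self x
  have hr₂ : (star x ⬝ᵥ R₂ *ᵥ x).im = 0 := hR₂.isHermitian.im_star_dotProduct_mulVec_self x
  rw [star_dotProduct_smul_add_mulVec, add_mulVec, add_mulVec, dotProduct_add,
    dotProduct_add] at h
  by_cases hz : star x ⬝ᵥ J₁ *ᵥ x + star x ⬝ᵥ R₁ *ᵥ x = 0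
  · rw [hz, mul_zero, zero_add] at h
    have ha₀ := Complex.eq_zero_of_re_eq_zero_of_add_eq_zero ha hr₁ hz
    have hb₀ := Complex.eq_zero_of_re_eq_zero_of_add_eq_zero hb hr₂ h
    exact hskew μ x hx (by rw [star_dotProduct_smul_add_mulVec, ha₀, hb₀, mul_zero, add_zero])
  · refine Complex.re_nonpos_of_mul_add_eq_zero_s14 hz ?_ h
    rw [Complex.re_conj_add_mul_add ha hb hr₁ hr₂]
    linarith [hcond x]

/-- Theorem 4.15(b): let `P(λ) = λ(J₁+R₁) + (J₂+R₂)` be a posH pencil such that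
`-(x*R₁x)(x*R₂x) + (x*J₁x)(x*J₂x) ≤ 0` for all `x`, `P(λ)` is regular, and the
numerical range of `λJ₁ + J₂` is contained in the closed left half-plane. Then
the numerical range of `P(λ)` is contained in the closed left half-plane. -/
theorem posH_numrange_left_half_plane_of_regular {n : ℕ}
    (J₁ J₂ R₁ R₂ : Matrix (Fin n) (Fin n) ℂ)
    (hJ₁ : J₁ᴴ = -J₁) (hJ₂ : J₂ᴴ = -J₂)
    (hR₁ : R₁.PosSemidef) (hR₂ : R₂.PosSemidef)
    (hcond : ∀ x : Fin n → ℂ,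
      (-(star x ⬝ᵥ (R₁ *ᵥ x)) * (star x ⬝ᵥ (R₂ *ᵥ x)) +
        (star x ⬝ᵥ (J₁ *ᵥ x)) * (star x ⬝ᵥ (J₂ *ᵥ x))).re ≤ 0)
    (hreg : ∃ μ : ℂ, (μ • (J₁ + R₁) + (J₂ + R₂)).det ≠ 0)
    (hskew : ∀ (μ : ℂ) (x : Fin n → ℂ), x ≠ 0 →
      star x ⬝ᵥ ((μ • J₁ + J₂) *ᵥ x) = 0 → μ.re ≤ 0) :
    ∀ (μ : ℂ) (x : Fin n → ℂ), x ≠ 0 →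
      star x ⬝ᵥ ((μ • (J₁ + R₁) + (J₂ + R₂)) *ᵥ x) = 0 → μ.re ≤ 0 :=
  posH_numrange_left_half_plane_of_regular_general J₁ J₂ R₁ R₂ hJ₁ hJ₂ hR₁ hR₂ hcond hskew
end
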